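/- Suppose λ ∈ Λ and let x* ∈ F be the unique free-flow equilibrium point. Let δ̄ = inf{‖x − x*‖₁ : x ∈ X \ F} > 0. Then x* is (locally) asymptotically stable, and the open ball B_δ̄(x*) = {x ∈ X : ‖x − x*‖₁ < δ̄} is contained in the region of attraction of x*: every solution of the non-FIFO dynamics with initial condition in B_δ̄(x*) converges to x* as t → ∞. -/

import Mathlib

open Matrix Finset

section MTN

variable {E K : Type*} [Fintype E] [Fintype K] [DecidableEq E]

/-- Total demand of flow directed into cell `j` (the denominator in the non-FIFO rule). -/
noncomputable def inflowDemand (d : E → K → ℝ → ℝ) (R : K → Matrix E E ℝ)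
    (x : E → K → ℝ) (j : E) : ℝ :=
  ∑ l, ∑ h, R h l j * d l h (x l h)

/-- The non-FIFO scaling factor `min {1, s_j(Σ_h x_j^h) / inflowDemand j}`,
taken equal to `1` when the denominator vanishes. -/
noncomputable def flowScale (d : E → K → ℝ → ℝ) (s : E → ℝ → ℝ)
    (R : K → Matrix E E ℝ) (x : E → K → ℝ) (j : E) : ℝ :=
  if inflowDemand d R x j = 0 then 1
  else min 1 (s j (∑ h, x j h) / inflowDemand d R x j)

/-- The non-FIFO inter-cell flow `f_ij^k(x)`. -/
noncomputable def interFlow (d : E → K → ℝ → ℝ) (s : E → ℝ → ℝ)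
    (R : K → Matrix E E ℝ) (x : E → K → ℝ) (i j : E) (k : K) : ℝ :=
  R k i j * d i k (x i k) * flowScale d s R x j

/-- Total outflow `z_i^k(x)` of commodity `k` from cell `i`. -/
noncomputable def outFlow (S : Finset E) (d : E → K → ℝ → ℝ) (s : E → ℝ → ℝ)
    (R : K → Matrix E E ℝ) (x : E → K → ℝ) (i : E) (k : K) : ℝ :=
  if i ∈ S then d i k (x i k) else ∑ j, interFlow d s R x i j k

/-- The right-hand side of the non-FIFO dynamics:
`ẋ_i^k = λ_i^k + Σ_j f_ji^k(x) − z_i^k(x)`. -/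
noncomputable def vectorField (S : Finset E) (d : E → K → ℝ → ℝ) (s : E → ℝ → ℝ)
    (R : K → Matrix E E ℝ) (lam : E → K → ℝ) (x : E → K → ℝ) (i : E) (k : K) : ℝ :=
  lam i k + (∑ j, interFlow d s R x j i k) - outFlow S d s R x i k

/-- The free-flow region `F ⊆ X = ℝ≥0^{E×K}`. -/
def FreeFlowRegion (Ron : Finset E) (d : E → K → ℝ → ℝ) (s : E → ℝ → ℝ)
    (R : K → Matrix E E ℝ) : Set (E → K → ℝ) :=
  {x | (∀ i k, 0 ≤ x i k) ∧
    ∀ i, i ∉ Ron → (∑ k, ∑ j, R k j i * d j k (x j k)) < s i (∑ k, x i k)}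

/-- The capacity region `C_i` of a non on-ramp cell, with demand functions `dI` and
supply function `sI`. -/
def capacityRegion (dI : K → ℝ → ℝ) (sI : ℝ → ℝ) : Set (K → ℝ) :=
  {ζ | (∀ k, 0 ≤ ζ k) ∧ ∃ ξ : K → ℝ, (∀ k, 0 ≤ ξ k) ∧ (∀ k, dI k (ξ k) = ζ k) ∧
    (∑ k, ζ k) < sI (∑ k, ξ k)}

/-- The transported inflow `((I − (R^k)ᵀ)⁻¹ λ^k)_i`. -/
noncomputable def transported (R : K → Matrix E E ℝ) (lam : E → K → ℝ)
    (i : E) (k : K) : ℝ :=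
  ((1 - (R k)ᵀ)⁻¹ *ᵥ fun j => lam j k) i

/-- The stability region `Λ`: nonnegative inflows supported on the on-ramps such that
the transported inflow vector lies in the capacity region of every non on-ramp cell. -/
def stabilityRegion (Ron : Finset E) (d : E → K → ℝ → ℝ) (s : E → ℝ → ℝ)
    (R : K → Matrix E E ℝ) : Set (E → K → ℝ) :=
  {lam | (∀ i k, 0 ≤ lam i k) ∧ (∀ i, i ∉ Ron → ∀ k, lam i k = 0) ∧
    ∀ i, i ∉ Ron → (fun k => transported R lam i k) ∈ capacityRegion (d i) (s i)}

end MTN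

/-- The `l1` distance of `x*` to the complement of the free-flow region inside the state
space `X = ℝ≥0^{E×K}` (as an extended nonnegative real, so it is `∞` when `X ⊆ F`):
`δ̄ = inf {‖x − x*‖₁ : x ∈ X \ F}`. -/
noncomputable def deltaBar {E K : Type*} [Fintype E] [Fintype K] [DecidableEq E]
    (Ron : Finset E) (d : E → K → ℝ → ℝ) (s : E → ℝ → ℝ) (R : K → Matrix E E ℝ)
    (xstar : E → K → ℝ) : ENNReal :=
  ⨅ x ∈ {x : E → K → ℝ | (∀ i k, 0 ≤ x i k) ∧ x ∉ FreeFlowRegion Ron d s R},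
    ENNReal.ofReal (∑ i, ∑ k, |x i k - xstar i k|)

/-!
In the free-flow region every scaling factor equals one, so with `y = d(x) - d(x*)` the dynamics
read `ẋᵢᵏ = ∑ⱼ Rᵏⱼᵢ yⱼᵏ - yᵢᵏ`, and `y` has the sign of `x - x*` because the demands increase.
Hence the right derivative of a weighted distance `∑ wᵢᵏ |xᵢᵏ - x*ᵢᵏ|` is at most
`∑ ((Rᵏ wᵏ)ⱼ - wⱼᵏ) |yⱼᵏ|`. With unit weights this is `≤ 0` since `Rᵏ` is substochastic, so the
`ℓ¹`-balls around `x*` of radius below `δ̄` are forward invariant; `δ̄ > 0` because `F` is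
relatively open in `X`. Out-connectedness makes `Rᵏ` transient, which yields weights `w ≥ 1` with
`Rᵏ wᵏ ≤ (1 - c) wᵏ`; together with a bound `|y| ≥ m |x - x*|` on the bounded trajectory,
Grönwall's inequality gives exponential decay of the weighted distance.
-/

open Set Filter Topology

theorem exists_pos_forall_le_of_finite {ι : Type*} [Finite ι] {f : ι → ℝ} (hf : ∀ i, 0 < f i) :
    ∃ c > 0, ∀ i, c ≤ f i := by
  have : ∀ᶠ c in 𝓝[>] (0 : ℝ), ∀ i, c ≤ f i :=
    eventually_all.2 fun i => eventually_nhdsWithin_of_eventually_nhds (eventually_le_nhds (hf i))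
  exact (this.and self_mem_nhdsWithin).exists.imp fun _ h => ⟨h.2, h.1⟩

/-- The right derivative of `|f|` at a point where `f = a` and `f' = a'`. -/
noncomputable def absRightDeriv (a a' : ℝ) : ℝ :=
  if a = 0 then |a'| else SignType.sign a * a'

theorem absRightDeriv_le {a a' b : ℝ} (hnonneg : 0 ≤ a → a' ≤ b) (hnonpos : a ≤ 0 → -a' ≤ b) :
    absRightDeriv a a' ≤ b := by
  unfold absRightDeriv
  rcases lt_trichotomy a 0 with ha | rfl | ha
  · simpa [ha.ne, ha] using hnonpos ha.le
  · simpa using abs_le'.2 ⟨hnonneg le_rfl, hnonpos le_rfl⟩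
  · simpa [ha.ne', ha] using hnonneg ha.le

theorem HasDerivWithinAt.abs_Ici {f : ℝ → ℝ} {f' t : ℝ} (hf : HasDerivWithinAt f f' (Ici t) t) :
    HasDerivWithinAt (fun z => |f z|) (absRightDeriv (f t) f') (Ici t) t := by
  unfold absRightDeriv
  split_ifs with h
  · rw [hasDerivWithinAt_iff_tendsto_slope, Ici_sdiff_left] at hf ⊢
    refine ((continuous_abs.tendsto f').comp hf).congr' ?_
    filter_upwards [self_mem_nhdsWithin] with z hz
    simp [slope_def_field, h, abs_div, abs_of_pos (sub_pos.2 (mem_Ioi.1 hz))]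
  · exact (hasDerivAt_abs h).comp_hasDerivWithinAt t hf

theorem le_mul_exp_of_deriv_right_le_mul {V D : ℝ → ℝ} {K : ℝ} (hV : ContinuousOn V (Ici 0))
    (hD : ∀ t ≥ 0, HasDerivWithinAt V (D t) (Ici t) t) (hbound : ∀ t ≥ 0, D t ≤ K * V t) :
    ∀ t ≥ 0, V t ≤ V 0 * Real.exp (K * t) := by
  intro T hT
  have := le_gronwallBound_of_liminf_deriv_right_le (hV.mono Icc_subset_Ici_self)
    (fun t ht _ hr => (hD t ht.1).liminf_right_slope_le hr) le_rfl
    (fun t ht => (hbound t ht.1).trans (le_add_of_nonneg_right le_rfl)) T (right_mem_Icc.2 hT)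
  rwa [sub_zero, gronwallBound_ε0] at this

theorem le_apply_zero_of_deriv_right_nonpos_of_lt {V D : ℝ → ℝ} {r : ℝ}
    (hV : ContinuousOn V (Ici 0)) (hD : ∀ t ≥ 0, HasDerivWithinAt V (D t) (Ici t) t)
    (hbound : ∀ t ≥ 0, V t < r → D t ≤ 0) (h0 : V 0 < r) : ∀ t ≥ 0, V t ≤ V 0 := by
  intro T hT
  -- Fence `V` by the lines `V 0 + ε * (1 + t)`, which stay below `r` on `[0, T]` for small `ε`.
  have hfence : ∀ ε > 0, ε * (1 + T) < r - V 0 → V T ≤ V 0 + ε * (1 + T) := by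
    intro ε hε hεr
    refine image_le_of_deriv_right_lt_deriv_boundary' (hV.mono Icc_subset_Ici_self)
      (fun t ht => hD t ht.1) (B := fun t => V 0 + ε * (1 + t)) (by simp [hε.le])
      (by fun_prop) (fun t _ => ((hasDerivAt_id t).const_add 1 |>.const_mul ε |>.const_add _
        |>.hasDerivWithinAt)) (fun t ht hVt => ?_) (right_mem_Icc.2 hT)
    have hlt : V t < r := by
      rw [hVt]
      nlinarith [ht.2]
    simpa using (hbound t ht.1 hlt).trans_lt hε
  have hlim : Tendsto (fun ε => V 0 + ε * (1 + T)) (𝓝[>] 0) (𝓝 (V 0)) := by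
    have hc : Continuous fun ε : ℝ => V 0 + ε * (1 + T) := by fun_prop
    exact (hc.tendsto' 0 _ (by simp)).mono_left nhdsWithin_le_nhds
  refine ge_of_tendsto hlim ?_
  filter_upwards [self_mem_nhdsWithin, eventually_nhdsWithin_of_eventually_nhds
    (eventually_lt_nhds (show (0 : ℝ) < (r - V 0) / (1 + T) by
      apply div_pos <;> linarith))] with ε hε hεr
  exact hfence ε hε (by rwa [lt_div_iff₀ (by linarith)] at hεr)

namespace Matrix

variable {ι : Type*} [Fintype ι] {A : Matrix ι ι ℝ}

theorem mulVec_le_one_of_substochastic (hA : ∀ i j, 0 ≤ A i j) (hrow : ∀ i, ∑ j, A i j ≤ 1)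
    {v : ι → ℝ} (hv : ∀ j, v j ≤ 1) (i : ι) : (A *ᵥ v) i ≤ 1 :=
  calc (A *ᵥ v) i = ∑ j, A i j * v j := rfl
    _ ≤ ∑ j, A i j := sum_le_sum fun j _ => mul_le_of_le_one_right (hA i j) (hv j)
    _ ≤ 1 := hrow i

theorem mul_one_sub_le_one_sub_mulVec (hA : ∀ i j, 0 ≤ A i j) (hrow : ∀ i, ∑ j, A i j ≤ 1)
    {v : ι → ℝ} (hv : ∀ j, v j ≤ 1) (i j : ι) : A i j * (1 - v j) ≤ 1 - (A *ᵥ v) i :=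
  calc A i j * (1 - v j) ≤ ∑ l, A i l * (1 - v l) :=
        single_le_sum (f := fun l => A i l * (1 - v l))
          (fun l _ => mul_nonneg (hA i l) (sub_nonneg.2 (hv l))) (mem_univ j)
    _ = ∑ l, A i l - (A *ᵥ v) i := by simp [mulVec, dotProduct, mul_sub]
    _ ≤ 1 - (A *ᵥ v) i := by linarith [hrow i]

variable [DecidableEq ι]

theorem pow_succ_mulVec (n : ℕ) (v : ι → ℝ) : A ^ (n + 1) *ᵥ v = A *ᵥ (A ^ n *ᵥ v) := by
  rw [pow_succ', mulVec_mulVec]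

theorem pow_mulVec_one_nonneg (hA : ∀ i j, 0 ≤ A i j) (n : ℕ) (i : ι) : 0 ≤ (A ^ n *ᵥ 1) i := by
  induction n generalizing i with
  | zero => simp
  | succ n ih =>
    rw [pow_succ_mulVec]
    exact sum_nonneg fun j _ => mul_nonneg (hA i j) (ih j)

theorem pow_mulVec_one_le_one (hA : ∀ i j, 0 ≤ A i j) (hrow : ∀ i, ∑ j, A i j ≤ 1) (n : ℕ)
    (i : ι) : (A ^ n *ᵥ 1) i ≤ 1 := by
  induction n generalizing i with
  | zero => simp
  | succ n ih =>
    rw [pow_succ_mulVec]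
    exact mulVec_le_one_of_substochastic hA hrow ih i

/-- The deficit `1 - A ^ n *ᵥ 1` at the end of a path propagates back to its start, damped by the
path weight. -/
theorem prod_mul_one_sub_le_one_sub_pow_mulVec_one (hA : ∀ i j, 0 ≤ A i j)
    (hrow : ∀ i, ∑ j, A i j ≤ 1) {l n : ℕ} (p : Fin (l + 1) → ι) (hln : l ≤ n) :
    (∏ h : Fin l, A (p h.castSucc) (p h.succ)) * (1 - ∑ j, A (p (Fin.last l)) j) ≤
      1 - (A ^ (n + 1) *ᵥ 1) (p 0) := by
  induction l generalizing n with
  | zero =>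
    rw [Fin.prod_univ_zero, one_mul, pow_succ_mulVec]
    exact sub_le_sub_left (sum_le_sum fun j _ =>
      mul_le_of_le_one_right (hA _ j) (pow_mulVec_one_le_one hA hrow n j)) 1
  | succ l ih =>
    obtain ⟨n, rfl⟩ : ∃ m, n = m + 1 := ⟨n - 1, by omega⟩
    have htail := ih (fun h => p h.succ) (n := n) (by omega)
    simp only [Fin.succ_last, Fin.succ_zero_eq_one] at htail
    rw [Fin.prod_univ_succ, pow_succ_mulVec (n + 1)]
    simp only [Fin.castSucc_zero, Fin.succ_zero_eq_one, ← Fin.succ_castSucc, mul_assoc]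
    exact (mul_le_mul_of_nonneg_left htail (hA _ _)).trans
      (mul_one_sub_le_one_sub_mulVec hA hrow (pow_mulVec_one_le_one hA hrow _) _ _)

theorem exists_pow_mulVec_one_lt_one (hA : ∀ i j, 0 ≤ A i j) (hrow : ∀ i, ∑ j, A i j ≤ 1)
    (hpath : ∀ i₀, ∃ (l : ℕ) (p : Fin (l + 1) → ι), p 0 = i₀ ∧ ∑ j, A (p (Fin.last l)) j < 1 ∧
      0 < ∏ h : Fin l, A (p h.castSucc) (p h.succ)) :
    ∃ L ≥ 1, ∀ i, (A ^ L *ᵥ 1) i < 1 := by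
  have hlt : ∀ i, ∀ᶠ n in atTop, (A ^ n *ᵥ 1) i < 1 := fun i => by
    obtain ⟨l, p, rfl, hlast, hprod⟩ := hpath i
    filter_upwards [eventually_ge_atTop (l + 1)] with n hn
    obtain ⟨n, rfl⟩ : ∃ m, n = m + 1 := ⟨n - 1, by omega⟩
    have := prod_mul_one_sub_le_one_sub_pow_mulVec_one hA hrow p (n := n) (by omega)
    nlinarith
  exact ((eventually_ge_atTop 1).and (eventually_all.2 hlt)).exists

/-- The truncated Neumann series `w = ∑_{n < L} A ^ n *ᵥ 1` satisfies
`A *ᵥ w = w - (1 - A ^ L *ᵥ 1)`, a uniform decrease since `1 ≤ w ≤ L`. -/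
theorem exists_contracting_weights (hA : ∀ i j, 0 ≤ A i j) (hrow : ∀ i, ∑ j, A i j ≤ 1)
    (hpath : ∀ i₀, ∃ (l : ℕ) (p : Fin (l + 1) → ι), p 0 = i₀ ∧ ∑ j, A (p (Fin.last l)) j < 1 ∧
      0 < ∏ h : Fin l, A (p h.castSucc) (p h.succ)) :
    ∃ w : ι → ℝ, (∀ i, 1 ≤ w i) ∧ ∃ c > 0, ∀ i, (A *ᵥ w) i ≤ (1 - c) * w i := by
  obtain ⟨L, hL1, hLlt⟩ := exists_pow_mulVec_one_lt_one hA hrow hpath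
  obtain ⟨c, hc, hcle⟩ := exists_pos_forall_le_of_finite fun i => sub_pos.2 (hLlt i)
  set w := ∑ n ∈ range L, A ^ n *ᵥ 1 with hw
  have hw1 : ∀ i, 1 ≤ w i := fun i => by
    simpa [hw] using single_le_sum (f := fun n => (A ^ n *ᵥ 1) i)
      (fun n _ => pow_mulVec_one_nonneg hA n i) (mem_range.2 hL1)
  have hwL : ∀ i, w i ≤ L := fun i => by
    simpa [hw] using sum_le_sum fun n (_ : n ∈ range L) => pow_mulVec_one_le_one hA hrow n i
  have hAw : A *ᵥ w = w + A ^ L *ᵥ 1 - 1 := by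
    have := sum_range_succ' (fun n => A ^ n *ᵥ 1) L
    rw [sum_range_succ, pow_zero, one_mulVec] at this
    simp only [hw, mulVec_sum, ← pow_succ_mulVec]
    linear_combination -this
  refine ⟨w, hw1, c / L, div_pos hc (by exact_mod_cast hL1), fun i => ?_⟩
  have hcw : c / L * w i ≤ c := by
    rw [div_mul_eq_mul_div, div_le_iff₀ (by exact_mod_cast hL1)]
    exact mul_le_mul_of_nonneg_left (hwL i) hc.le
  have := hcle i
  simp only [hAw, Pi.add_apply, Pi.sub_apply, Pi.one_apply]
  linarith

end Matrix

theorem strictMonoOn_Ici_of_deriv_pos {f : ℝ → ℝ} (hdiff : ∀ ξ : ℝ, 0 ≤ ξ → DifferentiableAt ℝ f ξ)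
    (hpos : ∀ ξ : ℝ, 0 ≤ ξ → 0 < deriv f ξ) : StrictMonoOn f (Ici 0) :=
  strictMonoOn_of_deriv_pos (convex_Ici 0)
    (fun ξ hξ => (hdiff ξ hξ).continuousAt.continuousWithinAt)
    fun ξ hξ => hpos ξ (interior_subset hξ)

/-- The difference quotient `dslope f a` is continuous and positive on `s`, so it has a positive
minimum there. -/
theorem exists_pos_mul_abs_sub_le_abs_sub {f : ℝ → ℝ} {s : Set ℝ} {a : ℝ} (hs : IsCompact s)
    (ha : a ∈ s) (hfs : ContinuousOn f s) (hmono : StrictMonoOn f s) (hfa : DifferentiableAt ℝ f a)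
    (hderiv : 0 < deriv f a) : ∃ m > 0, ∀ x ∈ s, m * |x - a| ≤ |f x - f a| := by
  have hpos : ∀ x ∈ s, 0 < dslope f a x := fun x hx => by
    rcases eq_or_ne x a with rfl | hxa
    · rwa [dslope_same]
    · rw [dslope_of_ne f hxa]
      exact hmono.slope_pos ha hx hxa.symm
  have hcont : ContinuousOn (dslope f a) s := fun x hx => by
    rcases eq_or_ne x a with rfl | hxa
    · exact (continuousAt_dslope_same.2 hfa).continuousWithinAt
    · exact (continuousWithinAt_dslope_of_ne hxa).2 (hfs x hx)
  obtain ⟨x₀, hx₀, hmin⟩ := hs.exists_isMinOn ⟨a, ha⟩ hcont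
  refine ⟨dslope f a x₀, hpos x₀ hx₀, fun x hx => ?_⟩
  rw [← sub_smul_dslope f a x, smul_eq_mul, abs_mul, abs_of_pos (hpos x hx),
    mul_comm (dslope f a x₀)]
  exact mul_le_mul_of_nonneg_left (isMinOn_iff.1 hmin x hx) (abs_nonneg _)

theorem absRightDeriv_sum_mul_sub_le {ι : Type*} [Fintype ι] {A : Matrix ι ι ℝ}
    (hA : ∀ i j, 0 ≤ A i j) {y : ι → ℝ} {a : ℝ} {i : ι} (hnonneg : 0 ≤ a → 0 ≤ y i)
    (hnonpos : a ≤ 0 → y i ≤ 0) :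
    absRightDeriv a (∑ j, A j i * y j - y i) ≤ ∑ j, A j i * |y j| - |y i| := by
  have habs_mul : ∀ j, |A j i * y j| = A j i * |y j| := fun j => by
    rw [abs_mul, abs_of_nonneg (hA j i)]
  have habs := abs_sum_le_sum_abs (fun j => A j i * y j) univ
  simp only [habs_mul] at habs
  refine absRightDeriv_le (fun ha => ?_) (fun ha => ?_)
  · rw [abs_of_nonneg (hnonneg ha)]
    linarith [le_abs_self (∑ j, A j i * y j)]
  · rw [abs_of_nonpos (hnonpos ha)]
    linarith [neg_abs_le (∑ j, A j i * y j)]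

theorem sum_mul_sum_mul_sub_eq {ι : Type*} [Fintype ι] (A : Matrix ι ι ℝ) (w v : ι → ℝ) :
    ∑ i, w i * (∑ j, A j i * v j - v i) = ∑ j, ((A *ᵥ w) j - w j) * v j := by
  simp only [mulVec, dotProduct, mul_sub, sub_mul, sum_sub_distrib, mul_sum,
    sum_mul]
  rw [sum_comm]
  congr 1
  exact sum_congr rfl fun _ _ => sum_congr rfl fun _ _ => by ring

section WeightedL1Dist

variable {E K : Type*} [Fintype E] [Fintype K]

noncomputable def weightedL1Dist (w : K → E → ℝ) (x y : E → K → ℝ) : ℝ :=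
  ∑ i, ∑ k, w k i * |x i k - y i k|

theorem weightedL1Dist_one (x y : E → K → ℝ) :
    weightedL1Dist 1 x y = ∑ i, ∑ k, |x i k - y i k| := by
  simp [weightedL1Dist]

theorem weightedL1Dist_nonneg {w : K → E → ℝ} (hw : ∀ k i, 0 ≤ w k i) (x y : E → K → ℝ) :
    0 ≤ weightedL1Dist w x y :=
  sum_nonneg fun i _ => sum_nonneg fun k _ => mul_nonneg (hw k i) (abs_nonneg _)

theorem abs_sub_le_weightedL1Dist {w : K → E → ℝ} (hw : ∀ k i, 1 ≤ w k i) (x y : E → K → ℝ)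
    (i : E) (k : K) : |x i k - y i k| ≤ weightedL1Dist w x y := by
  have hterm : ∀ i k, 0 ≤ w k i * |x i k - y i k| := fun i k =>
    mul_nonneg (zero_le_one.trans (hw k i)) (abs_nonneg _)
  calc |x i k - y i k| ≤ w k i * |x i k - y i k| := le_mul_of_one_le_left (abs_nonneg _) (hw k i)
    _ ≤ ∑ k', w k' i * |x i k' - y i k'| :=
      single_le_sum (fun k' _ => hterm i k') (mem_univ k)
    _ ≤ weightedL1Dist w x y :=
      single_le_sum (f := fun i' => ∑ k', w k' i' * |x i' k' - y i' k'|)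
        (fun i' _ => sum_nonneg fun k' _ => hterm i' k') (mem_univ i)

theorem dist_le_weightedL1Dist {w : K → E → ℝ} (hw : ∀ k i, 1 ≤ w k i) (x y : E → K → ℝ) :
    dist x y ≤ weightedL1Dist w x y := by
  have hnonneg := weightedL1Dist_nonneg (fun k i => zero_le_one.trans (hw k i)) x y
  refine (dist_pi_le_iff hnonneg).2 fun i => (dist_pi_le_iff hnonneg).2 fun k => ?_
  rw [Real.dist_eq]
  exact abs_sub_le_weightedL1Dist hw x y i k

theorem continuous_weightedL1Dist (w : K → E → ℝ) (y : E → K → ℝ) :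
    Continuous fun x => weightedL1Dist w x y := by
  unfold weightedL1Dist
  fun_prop

theorem hasDerivWithinAt_weightedL1Dist {x : ℝ → E → K → ℝ} {x' : E → K → ℝ} {t : ℝ}
    (hx : HasDerivWithinAt x x' (Ici t) t) (w : K → E → ℝ) (y : E → K → ℝ) :
    HasDerivWithinAt (fun τ => weightedL1Dist w (x τ) y)
      (∑ i, ∑ k, w k i * absRightDeriv (x t i k - y i k) (x' i k)) (Ici t) t := by
  refine HasDerivWithinAt.fun_sum fun i _ => HasDerivWithinAt.fun_sum fun k _ => ?_
  have hxik : HasDerivWithinAt (fun τ => x τ i k) (x' i k) (Ici t) t :=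
    hasDerivWithinAt_pi.1 (hasDerivWithinAt_pi.1 hx i) k
  exact ((hxik.sub_const (y i k)).abs_Ici).const_mul (w k i)

theorem continuousOn_weightedL1Dist_of_hasDerivWithinAt {x : ℝ → E → K → ℝ}
    {v : (E → K → ℝ) → E → K → ℝ} (hx : ∀ t ≥ 0, HasDerivWithinAt x (v (x t)) (Ici 0) t)
    (w : K → E → ℝ) (y : E → K → ℝ) : ContinuousOn (fun τ => weightedL1Dist w (x τ) y) (Ici 0) :=
  (continuous_weightedL1Dist w y).comp_continuousOn fun t ht => (hx t ht).continuousWithinAt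

end WeightedL1Dist

section FreeFlow

variable {E K : Type*} [Fintype E] [Fintype K]
  {Ron S : Finset E} {d : E → K → ℝ → ℝ} {s : E → ℝ → ℝ} {R : K → Matrix E E ℝ}
  {lam x xstar : E → K → ℝ}

theorem flowScale_eq_one_of_mem_freeFlowRegion (hRnn : ∀ k i j, 0 ≤ R k i j)
    (hRon : ∀ k i j, j ∈ Ron → R k i j = 0) (hdnn : ∀ i k, ∀ ξ : ℝ, 0 ≤ ξ → 0 ≤ d i k ξ)
    (hx : x ∈ FreeFlowRegion Ron d s R) (j : E) : flowScale d s R x j = 1 := by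
  rw [flowScale]
  split_ifs with h
  · rfl
  have hj : j ∉ Ron := fun hj => h <| sum_eq_zero fun l _ => sum_eq_zero
    fun k _ => by rw [hRon k l j hj, zero_mul]
  have hpos : 0 < inflowDemand d R x j := lt_of_le_of_ne (sum_nonneg fun l _ =>
    sum_nonneg fun k _ => mul_nonneg (hRnn k l j) (hdnn l k _ (hx.1 l k))) (Ne.symm h)
  have hlt : inflowDemand d R x j < s j (∑ h, x j h) := by
    rw [inflowDemand, sum_comm]
    exact hx.2 j hj
  exact min_eq_left ((one_le_div hpos).2 hlt.le)

theorem exists_pos_forall_mem_freeFlowRegion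
    (hdcont : ∀ i k, ∀ ξ : ℝ, 0 ≤ ξ → ContinuousAt (d i k) ξ)
    (hscont : ∀ i, i ∉ Ron → ContinuousOn (s i) (Ici 0))
    (hxstar : xstar ∈ FreeFlowRegion Ron d s R) :
    ∃ δ > 0, ∀ x : E → K → ℝ, (∀ i k, 0 ≤ x i k) → ∑ i, ∑ k, |x i k - xstar i k| < δ →
      x ∈ FreeFlowRegion Ron d s R := by
  set X : Set (E → K → ℝ) := {x | ∀ i k, 0 ≤ x i k}
  have hev : ∀ᶠ x in 𝓝[X] xstar, ∀ i, i ∉ Ron →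
      ∑ k, ∑ j, R k j i * d j k (x j k) < s i (∑ k, x i k) := by
    refine eventually_all.2 fun i => ?_
    by_cases hi : i ∈ Ron
    · exact Eventually.of_forall fun _ h => absurd hi h
    have hdemand : ContinuousAt (fun x : E → K → ℝ => ∑ k, ∑ j, R k j i * d j k (x j k)) xstar :=
      tendsto_finsetSum _ fun k _ => tendsto_finsetSum _ fun j _ =>
        ((hdcont j k _ (hxstar.1 j k)).comp (f := fun x : E → K → ℝ => x j k)
          ((continuous_apply k).comp (continuous_apply j)).continuousAt).const_mul _
    have hsupply : ContinuousWithinAt (fun x : E → K → ℝ => s i (∑ k, x i k)) X xstar :=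
      (hscont i hi _ (sum_nonneg fun k _ => hxstar.1 i k)).comp
        (f := fun x : E → K → ℝ => ∑ k, x i k) (by fun_prop : Continuous _).continuousWithinAt
        fun x (hx : x ∈ X) => sum_nonneg fun k _ => hx i k
    filter_upwards [(hsupply.sub hdemand.continuousWithinAt).eventually
      (lt_mem_nhds (sub_pos.2 (hxstar.2 i hi)))] with x hx _
    exact sub_pos.1 hx
  obtain ⟨δ, hδ, hsub⟩ := Metric.mem_nhdsWithin_iff.1 hev
  refine ⟨δ, hδ, fun x hx hxδ => ⟨hx, hsub ⟨?_, hx⟩⟩⟩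
  rw [Metric.mem_ball]
  exact (dist_le_weightedL1Dist (fun _ _ => le_rfl) x xstar).trans_lt
    ((weightedL1Dist_one x xstar).trans_lt hxδ)

variable [DecidableEq E]

theorem vectorField_eq_of_mem_freeFlowRegion (hRnn : ∀ k i j, 0 ≤ R k i j)
    (hRon : ∀ k i j, j ∈ Ron → R k i j = 0) (hRrow : ∀ k i, i ∉ S → ∑ j, R k i j = 1)
    (hdnn : ∀ i k, ∀ ξ : ℝ, 0 ≤ ξ → 0 ≤ d i k ξ) (hx : x ∈ FreeFlowRegion Ron d s R)
    (i : E) (k : K) :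
    vectorField S d s R lam x i k = lam i k + ∑ j, R k j i * d j k (x j k) - d i k (x i k) := by
  have hscale := flowScale_eq_one_of_mem_freeFlowRegion hRnn hRon hdnn hx
  simp only [vectorField, outFlow, interFlow, hscale, mul_one]
  split_ifs with hi
  · rfl
  · rw [← sum_mul, hRrow k i hi, one_mul]

theorem vectorField_eq_of_isEquilibrium (hRnn : ∀ k i j, 0 ≤ R k i j)
    (hRon : ∀ k i j, j ∈ Ron → R k i j = 0) (hRrow : ∀ k i, i ∉ S → ∑ j, R k i j = 1)
    (hdnn : ∀ i k, ∀ ξ : ℝ, 0 ≤ ξ → 0 ≤ d i k ξ) (hxstar : xstar ∈ FreeFlowRegion Ron d s R)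
    (hEq : ∀ i k, vectorField S d s R lam xstar i k = 0) (hx : x ∈ FreeFlowRegion Ron d s R)
    (i : E) (k : K) :
    vectorField S d s R lam x i k = ∑ j, R k j i * (d j k (x j k) - d j k (xstar j k)) -
      (d i k (x i k) - d i k (xstar i k)) := by
  have h := hEq i k
  rw [vectorField_eq_of_mem_freeFlowRegion hRnn hRon hRrow hdnn hxstar] at h
  rw [vectorField_eq_of_mem_freeFlowRegion hRnn hRon hRrow hdnn hx]
  simp only [mul_sub, sum_sub_distrib]
  linarith

theorem sum_mul_absRightDeriv_vectorField_le (hRnn : ∀ k i j, 0 ≤ R k i j)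
    (hRon : ∀ k i j, j ∈ Ron → R k i j = 0) (hRrow : ∀ k i, i ∉ S → ∑ j, R k i j = 1)
    (hdnn : ∀ i k, ∀ ξ : ℝ, 0 ≤ ξ → 0 ≤ d i k ξ) (hdmono : ∀ i k, MonotoneOn (d i k) (Ici 0))
    (hxstar : xstar ∈ FreeFlowRegion Ron d s R)
    (hEq : ∀ i k, vectorField S d s R lam xstar i k = 0) (hx : x ∈ FreeFlowRegion Ron d s R)
    {w : K → E → ℝ} (hw : ∀ k i, 0 ≤ w k i) :
    ∑ i, ∑ k, w k i * absRightDeriv (x i k - xstar i k) (vectorField S d s R lam x i k) ≤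
      ∑ k, ∑ j, ((R k *ᵥ w k) j - w k j) * |d j k (x j k) - d j k (xstar j k)| := by
  rw [sum_comm]
  refine sum_le_sum fun k _ => ?_
  rw [← sum_mul_sum_mul_sub_eq]
  refine sum_le_sum fun i _ => mul_le_mul_of_nonneg_left ?_ (hw k i)
  rw [vectorField_eq_of_isEquilibrium hRnn hRon hRrow hdnn hxstar hEq hx]
  -- `x - x*` and `d x - d x*` have the same sign because the demands are monotone.
  exact absRightDeriv_sum_mul_sub_le (hRnn k)
    (fun h => sub_nonneg.2 (hdmono i k (hxstar.1 i k) (hx.1 i k) (sub_nonneg.1 h)))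
    (fun h => sub_nonpos.2 (hdmono i k (hx.1 i k) (hxstar.1 i k) (sub_nonpos.1 h)))

theorem sum_abs_sub_le_initial_of_ball_subset_freeFlowRegion (hRnn : ∀ k i j, 0 ≤ R k i j)
    (hRon : ∀ k i j, j ∈ Ron → R k i j = 0) (hRrow : ∀ k i, i ∉ S → ∑ j, R k i j = 1)
    (hRsub : ∀ k i, ∑ j, R k i j ≤ 1) (hdnn : ∀ i k, ∀ ξ : ℝ, 0 ≤ ξ → 0 ≤ d i k ξ)
    (hdmono : ∀ i k, MonotoneOn (d i k) (Ici 0)) (hxstar : xstar ∈ FreeFlowRegion Ron d s R)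
    (hEq : ∀ i k, vectorField S d s R lam xstar i k = 0) {r : ℝ}
    (hball : ∀ z : E → K → ℝ, (∀ i k, 0 ≤ z i k) → ∑ i, ∑ k, |z i k - xstar i k| < r →
      z ∈ FreeFlowRegion Ron d s R)
    {x : ℝ → E → K → ℝ} (hx : ∀ t ≥ 0, HasDerivWithinAt x (vectorField S d s R lam (x t)) (Ici 0) t)
    (hxnn : ∀ t ≥ 0, ∀ i k, 0 ≤ x t i k) (h0 : ∑ i, ∑ k, |x 0 i k - xstar i k| < r) :
    ∀ t ≥ 0, ∑ i, ∑ k, |x t i k - xstar i k| ≤ ∑ i, ∑ k, |x 0 i k - xstar i k| := by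
  simp only [← weightedL1Dist_one] at hball h0 ⊢
  refine le_apply_zero_of_deriv_right_nonpos_of_lt
    (continuousOn_weightedL1Dist_of_hasDerivWithinAt hx 1 xstar)
    (fun t ht => hasDerivWithinAt_weightedL1Dist ((hx t ht).mono (Ici_subset_Ici.2 ht)) 1 xstar)
    (fun t ht hr => ?_) h0
  refine (sum_mul_absRightDeriv_vectorField_le hRnn hRon hRrow hdnn hdmono hxstar hEq
    (hball _ (hxnn t ht) hr) fun _ _ => zero_le_one).trans ?_
  refine sum_nonpos fun k _ => sum_nonpos fun j _ =>
    mul_nonpos_of_nonpos_of_nonneg ?_ (abs_nonneg _)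
  simpa [mulVec, dotProduct] using hRsub k j

theorem sum_mul_absRightDeriv_vectorField_le_neg_mul (hRnn : ∀ k i j, 0 ≤ R k i j)
    (hRon : ∀ k i j, j ∈ Ron → R k i j = 0) (hRrow : ∀ k i, i ∉ S → ∑ j, R k i j = 1)
    (hdnn : ∀ i k, ∀ ξ : ℝ, 0 ≤ ξ → 0 ≤ d i k ξ) (hdmono : ∀ i k, MonotoneOn (d i k) (Ici 0))
    (hxstar : xstar ∈ FreeFlowRegion Ron d s R)
    (hEq : ∀ i k, vectorField S d s R lam xstar i k = 0) (hx : x ∈ FreeFlowRegion Ron d s R)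
    {w : K → E → ℝ} (hw : ∀ k i, 0 ≤ w k i) {c : K → ℝ} (hc : ∀ k, 0 ≤ c k)
    (hcontr : ∀ k j, (R k *ᵥ w k) j ≤ (1 - c k) * w k j) {m : E → K → ℝ}
    (hslope : ∀ j k, m j k * |x j k - xstar j k| ≤ |d j k (x j k) - d j k (xstar j k)|) {μ : ℝ}
    (hμ : ∀ j k, μ ≤ c k * m j k) :
    ∑ i, ∑ k, w k i * absRightDeriv (x i k - xstar i k) (vectorField S d s R lam x i k) ≤
      -μ * weightedL1Dist w x xstar := by
  have hterm : ∀ k j, ((R k *ᵥ w k) j - w k j) * |d j k (x j k) - d j k (xstar j k)| ≤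
      -μ * (w k j * |x j k - xstar j k|) := fun k j =>
    calc ((R k *ᵥ w k) j - w k j) * |d j k (x j k) - d j k (xstar j k)|
        ≤ -(c k * w k j) * |d j k (x j k) - d j k (xstar j k)| :=
          mul_le_mul_of_nonneg_right (by linarith [hcontr k j]) (abs_nonneg _)
      _ ≤ -(c k * w k j) * (m j k * |x j k - xstar j k|) :=
          mul_le_mul_of_nonpos_left (hslope j k) (neg_nonpos.2 (mul_nonneg (hc k) (hw k j)))
      _ ≤ -μ * (w k j * |x j k - xstar j k|) := by
          nlinarith [mul_le_mul_of_nonneg_right (hμ j k)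
            (mul_nonneg (hw k j) (abs_nonneg (x j k - xstar j k)))]
  calc _ ≤ ∑ k, ∑ j, ((R k *ᵥ w k) j - w k j) * |d j k (x j k) - d j k (xstar j k)| :=
        sum_mul_absRightDeriv_vectorField_le hRnn hRon hRrow hdnn hdmono hxstar hEq hx hw
    _ ≤ ∑ k, ∑ j, -μ * (w k j * |x j k - xstar j k|) :=
        sum_le_sum fun k _ => sum_le_sum fun j _ => hterm k j
    _ = -μ * weightedL1Dist w x xstar := by
        rw [weightedL1Dist, sum_comm, mul_sum]
        simp only [mul_sum]

theorem tendsto_of_forall_mem_freeFlowRegion (hRnn : ∀ k i j, 0 ≤ R k i j)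
    (hRon : ∀ k i j, j ∈ Ron → R k i j = 0) (hRrow : ∀ k i, i ∉ S → ∑ j, R k i j = 1)
    (hRsub : ∀ k i, ∑ j, R k i j ≤ 1)
    (hRpath : ∀ k i₀, ∃ (l : ℕ) (p : Fin (l + 1) → E), p 0 = i₀ ∧
      ∑ j, R k (p (Fin.last l)) j < 1 ∧ 0 < ∏ h : Fin l, R k (p h.castSucc) (p h.succ))
    (hdnn : ∀ i k, ∀ ξ : ℝ, 0 ≤ ξ → 0 ≤ d i k ξ)
    (hdDiff : ∀ i k, ∀ ξ : ℝ, 0 ≤ ξ → DifferentiableAt ℝ (d i k) ξ)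
    (hdpos : ∀ i k, ∀ ξ : ℝ, 0 ≤ ξ → 0 < deriv (d i k) ξ)
    (hxstar : xstar ∈ FreeFlowRegion Ron d s R)
    (hEq : ∀ i k, vectorField S d s R lam xstar i k = 0)
    {x : ℝ → E → K → ℝ} (hx : ∀ t ≥ 0, HasDerivWithinAt x (vectorField S d s R lam (x t)) (Ici 0) t)
    (hF : ∀ t ≥ 0, x t ∈ FreeFlowRegion Ron d s R) {C : ℝ}
    (hC : ∀ t ≥ 0, ∑ i, ∑ k, |x t i k - xstar i k| ≤ C) :
    Tendsto x atTop (𝓝 xstar) := by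
  have hdmono := fun i k => strictMonoOn_Ici_of_deriv_pos (hdDiff i k) (hdpos i k)
  choose w hw1 c hc hcontr using fun k => Matrix.exists_contracting_weights (hRnn k) (hRsub k)
    (hRpath k)
  have hw : ∀ k i, 0 ≤ w k i := fun k i => zero_le_one.trans (hw1 k i)
  have hC0 : 0 ≤ C := (weightedL1Dist_nonneg (fun _ _ => zero_le_one) _ _).trans
    ((weightedL1Dist_one _ _).trans_le (hC 0 le_rfl))
  have hxIcc : ∀ t ≥ 0, ∀ i k, x t i k ∈ Icc 0 (xstar i k + C) := fun t ht i k =>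
    ⟨(hF t ht).1 i k, by
      linarith [le_abs_self (x t i k - xstar i k), (abs_sub_le_weightedL1Dist
        (fun _ _ => le_rfl) (x t) xstar i k).trans ((weightedL1Dist_one _ _).trans_le (hC t ht))]⟩
  choose m hm hslope using fun i k => exists_pos_mul_abs_sub_le_abs_sub
    (isCompact_Icc (a := 0) (b := xstar i k + C)) ⟨hxstar.1 i k, le_add_of_nonneg_right hC0⟩
    (fun ξ hξ => (hdDiff i k ξ hξ.1).continuousAt.continuousWithinAt)
    ((hdmono i k).mono Icc_subset_Ici_self) (hdDiff i k _ (hxstar.1 i k))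
    (hdpos i k _ (hxstar.1 i k))
  obtain ⟨μ, hμ, hμle⟩ := exists_pos_forall_le_of_finite fun p : E × K =>
    mul_pos (hc p.2) (hm p.1 p.2)
  have hdecay := le_mul_exp_of_deriv_right_le_mul (K := -μ)
    (continuousOn_weightedL1Dist_of_hasDerivWithinAt hx w xstar)
    (fun t ht => hasDerivWithinAt_weightedL1Dist ((hx t ht).mono (Ici_subset_Ici.2 ht)) w xstar)
    fun t ht => sum_mul_absRightDeriv_vectorField_le_neg_mul hRnn hRon hRrow hdnn
      (fun i k => (hdmono i k).monotoneOn) hxstar hEq (hF t ht) hw (fun k => (hc k).le) hcontr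
      (fun j k => hslope j k _ (hxIcc t ht j k)) fun j k => hμle (j, k)
  have hexp : Tendsto (fun t => weightedL1Dist w (x 0) xstar * Real.exp (-μ * t)) atTop (𝓝 0) := by
    simpa using (Real.tendsto_exp_atBot.comp
      (tendsto_id.const_mul_atTop_of_neg (neg_neg_of_pos hμ))).const_mul
      (weightedL1Dist w (x 0) xstar)
  rw [tendsto_iff_dist_tendsto_zero]
  refine squeeze_zero' (Eventually.of_forall fun t => dist_nonneg) ?_ hexp
  filter_upwards [eventually_ge_atTop 0] with t ht
  exact (dist_le_weightedL1Dist hw1 _ _).trans (hdecay t ht)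

end FreeFlow

section DeltaBar

variable {E K : Type*} [Fintype E] [Fintype K] [DecidableEq E]
  {Ron : Finset E} {d : E → K → ℝ → ℝ} {s : E → ℝ → ℝ} {R : K → Matrix E E ℝ} {xstar : E → K → ℝ}

theorem ofReal_le_deltaBar {δ : ℝ}
    (hball : ∀ x : E → K → ℝ, (∀ i k, 0 ≤ x i k) → ∑ i, ∑ k, |x i k - xstar i k| < δ →
      x ∈ FreeFlowRegion Ron d s R) :
    ENNReal.ofReal δ ≤ deltaBar Ron d s R xstar :=
  le_iInf₂ fun x hx => ENNReal.ofReal_le_ofReal (not_lt.1 fun h => hx.2 (hball x hx.1 h))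

theorem mem_freeFlowRegion_of_lt_deltaBar {r : ℝ} (hr : ENNReal.ofReal r < deltaBar Ron d s R xstar)
    {x : E → K → ℝ} (hx : ∀ i k, 0 ≤ x i k) (hxr : ∑ i, ∑ k, |x i k - xstar i k| < r) :
    x ∈ FreeFlowRegion Ron d s R := by
  by_contra hxF
  exact (((iInf₂_le x ⟨hx, hxF⟩).trans (ENNReal.ofReal_le_ofReal hxr.le)).trans_lt hr).false

end DeltaBar

theorem freeflow_equilibrium_asymptotically_stable_general
    {E K : Type*} [Fintype E] [Fintype K] [DecidableEq E]
    (Ron S : Finset E)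
    (d : E → K → ℝ → ℝ) (s : E → ℝ → ℝ) (R : K → Matrix E E ℝ)
    (hdDiff : ∀ i k, ∀ ξ : ℝ, 0 ≤ ξ → DifferentiableAt ℝ (d i k) ξ)
    (hdpos : ∀ i k, ∀ ξ : ℝ, 0 ≤ ξ → 0 < deriv (d i k) ξ)
    (hdnn : ∀ i k, ∀ ξ : ℝ, 0 ≤ ξ → 0 ≤ d i k ξ)
    (hslip : ∀ i, i ∉ Ron → ∃ L : NNReal, LipschitzOnWith L (s i) (Set.Ici 0))
    (hRnn : ∀ k i j, 0 ≤ R k i j)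
    (hRzero : ∀ k i j, j ∈ Ron ∨ i ∈ S → R k i j = 0)
    (hRrow1 : ∀ k i, i ∉ S → ∑ j, R k i j = 1)
    (hRout : ∀ k (i₀ : E), ∃ (l : ℕ) (p : Fin (l + 1) → E), p 0 = i₀ ∧
      p (Fin.last l) ∈ S ∧ 0 < ∏ h : Fin l, R k (p h.castSucc) (p h.succ))
    (lam : E → K → ℝ)
    (xstar : E → K → ℝ)
    (hxstarF : xstar ∈ FreeFlowRegion Ron d s R)
    (hxstarEq : ∀ i k, vectorField S d s R lam xstar i k = 0) :
    0 < deltaBar Ron d s R xstar ∧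
    (∀ ε > (0 : ℝ), ∃ η > (0 : ℝ), ∀ x : ℝ → E → K → ℝ,
      ((∀ t : ℝ, 0 ≤ t →
          HasDerivWithinAt x (fun i k => vectorField S d s R lam (x t) i k)
            (Set.Ici 0) t) ∧
        (∀ t : ℝ, 0 ≤ t → ∀ i k, 0 ≤ x t i k)) →
      (∑ i, ∑ k, |x 0 i k - xstar i k|) < η →
      ∀ t : ℝ, 0 ≤ t → (∑ i, ∑ k, |x t i k - xstar i k|) < ε) ∧
    (∀ x : ℝ → E → K → ℝ,
      ((∀ t : ℝ, 0 ≤ t →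
          HasDerivWithinAt x (fun i k => vectorField S d s R lam (x t) i k)
            (Set.Ici 0) t) ∧
        (∀ t : ℝ, 0 ≤ t → ∀ i k, 0 ≤ x t i k)) →
      ENNReal.ofReal (∑ i, ∑ k, |x 0 i k - xstar i k|) < deltaBar Ron d s R xstar →
      Filter.Tendsto (fun t => x t) Filter.atTop (nhds xstar)) := by
  have hRon : ∀ k i j, j ∈ Ron → R k i j = 0 := fun k i j hj => hRzero k i j (.inl hj)
  have hRS : ∀ k i, i ∈ S → ∑ j, R k i j = 0 := fun k i hi =>
    sum_eq_zero fun j _ => hRzero k i j (.inr hi)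
  have hRsub : ∀ k i, ∑ j, R k i j ≤ 1 := fun k i => by
    by_cases hi : i ∈ S
    · simp [hRS k i hi]
    · exact (hRrow1 k i hi).le
  have hRpath : ∀ k (i₀ : E), ∃ (l : ℕ) (p : Fin (l + 1) → E), p 0 = i₀ ∧
      ∑ j, R k (p (Fin.last l)) j < 1 ∧ 0 < ∏ h : Fin l, R k (p h.castSucc) (p h.succ) :=
    fun k i₀ => (hRout k i₀).imp fun _ => Exists.imp fun _ ⟨h0, hS, hprod⟩ =>
      ⟨h0, (hRS k _ hS).trans_lt one_pos, hprod⟩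
  have hdmono i k := (strictMonoOn_Ici_of_deriv_pos (hdDiff i k) (hdpos i k)).monotoneOn
  have hinv r := sum_abs_sub_le_initial_of_ball_subset_freeFlowRegion (r := r)
    hRnn hRon hRrow1 hRsub hdnn hdmono hxstarF hxstarEq
  obtain ⟨δ, hδ, hball⟩ := exists_pos_forall_mem_freeFlowRegion
    (fun i k ξ hξ => (hdDiff i k ξ hξ).continuousAt)
    (fun i hi => (hslip i hi).elim fun _ hL => hL.continuousOn) hxstarF
  refine ⟨(ENNReal.ofReal_pos.2 hδ).trans_le (ofReal_le_deltaBar hball), fun ε hε => ?_, ?_⟩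
  · refine ⟨min ε δ, lt_min hε hδ, fun x ⟨hx, hxnn⟩ h0 t ht => ?_⟩
    exact (hinv δ hball hx hxnn (h0.trans_le (min_le_right _ _)) t ht).trans_lt
      (h0.trans_le (min_le_left _ _))
  · rintro x ⟨hx, hxnn⟩ h0
    obtain ⟨r, -, h0r, hrδ⟩ := ENNReal.lt_iff_exists_real_btwn.1 h0
    have hballr := fun z => mem_freeFlowRegion_of_lt_deltaBar (x := z) hrδ
    have hxr := (ENNReal.ofReal_lt_ofReal_iff'.1 h0r).1
    have hle := hinv r hballr hx hxnn hxr
    exact tendsto_of_forall_mem_freeFlowRegion hRnn hRon hRrow1 hRsub hRpath hdnn hdDiff hdpos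
      hxstarF hxstarEq hx (fun t ht => hballr _ (hxnn t ht) ((hle t ht).trans_lt hxr)) hle

/-- main theorem: if the exogenous inflow lies in the stability region and
`x*` is the free-flow equilibrium point, then `δ̄ = inf{‖x − x*‖₁ : x ∈ X \ F} > 0`,
`x*` is (locally) asymptotically stable, and every solution of the non-FIFO dynamics
starting in the open `l1`-ball of radius `δ̄` around `x*` converges to `x*`. -/
theorem freeflow_equilibrium_asymptotically_stable
    {E K : Type*} [Fintype E] [Fintype K] [DecidableEq E] [Nonempty E] [Nonempty K]
    (Ron S : Finset E) (hRonNe : Ron.Nonempty) (hSNe : S.Nonempty) (hdisj : Disjoint Ron S)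
    (d : E → K → ℝ → ℝ) (s : E → ℝ → ℝ) (R : K → Matrix E E ℝ)
    (hd0 : ∀ i k, d i k 0 = 0)
    (hdDiff : ∀ i k, ∀ ξ : ℝ, 0 ≤ ξ → DifferentiableAt ℝ (d i k) ξ)
    (hdpos : ∀ i k, ∀ ξ : ℝ, 0 ≤ ξ → 0 < deriv (d i k) ξ)
    (hdnn : ∀ i k, ∀ ξ : ℝ, 0 ≤ ξ → 0 ≤ d i k ξ)
    (hslip : ∀ i, i ∉ Ron → ∃ L : NNReal, LipschitzOnWith L (s i) (Set.Ici 0))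
    (hsmono : ∀ i, i ∉ Ron → ∀ ξ η : ℝ, 0 ≤ η → η ≤ ξ → s i ξ ≤ s i η)
    (hs0 : ∀ i, i ∉ Ron → 0 < s i 0)
    (hsnn : ∀ i, i ∉ Ron → ∀ ξ : ℝ, 0 ≤ ξ → 0 ≤ s i ξ)
    (hRnn : ∀ k i j, 0 ≤ R k i j)
    (hRzero : ∀ k i j, j ∈ Ron ∨ i ∈ S → R k i j = 0)
    (hRrow1 : ∀ k i, i ∉ S → ∑ j, R k i j = 1)
    (hRrow0 : ∀ k i, i ∈ S → ∑ j, R k i j = 0)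
    (hRout : ∀ k (i₀ : E), ∃ (l : ℕ) (p : Fin (l + 1) → E), p 0 = i₀ ∧
      p (Fin.last l) ∈ S ∧ 0 < ∏ h : Fin l, R k (p h.castSucc) (p h.succ))
    (lam : E → K → ℝ) (hlamnn : ∀ i k, 0 ≤ lam i k)
    (hlamsupp : ∀ i, i ∉ Ron → ∀ k, lam i k = 0)
    (hlam : lam ∈ stabilityRegion Ron d s R)
    (xstar : E → K → ℝ)
    (hxstarF : xstar ∈ FreeFlowRegion Ron d s R)
    (hxstarEq : ∀ i k, vectorField S d s R lam xstar i k = 0) :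
    0 < deltaBar Ron d s R xstar ∧
    (∀ ε > (0 : ℝ), ∃ η > (0 : ℝ), ∀ x : ℝ → E → K → ℝ,
      ((∀ t : ℝ, 0 ≤ t →
          HasDerivWithinAt x (fun i k => vectorField S d s R lam (x t) i k)
            (Set.Ici 0) t) ∧
        (∀ t : ℝ, 0 ≤ t → ∀ i k, 0 ≤ x t i k)) →
      (∑ i, ∑ k, |x 0 i k - xstar i k|) < η →
      ∀ t : ℝ, 0 ≤ t → (∑ i, ∑ k, |x t i k - xstar i k|) < ε) ∧
    (∀ x : ℝ → E → K → ℝ,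
      ((∀ t : ℝ, 0 ≤ t →
          HasDerivWithinAt x (fun i k => vectorField S d s R lam (x t) i k)
            (Set.Ici 0) t) ∧
        (∀ t : ℝ, 0 ≤ t → ∀ i k, 0 ≤ x t i k)) →
      ENNReal.ofReal (∑ i, ∑ k, |x 0 i k - xstar i k|) < deltaBar Ron d s R xstar →
      Filter.Tendsto (fun t => x t) Filter.atTop (nhds xstar)) :=
  freeflow_equilibrium_asymptotically_stable_general Ron S d s R hdDiff hdpos hdnn hslip hRnn hRzero
    hRrow1 hRout lam xstar hxstarF hxstarEq
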